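/- arXiv:2009.13378 — 2 statements merged into one kernel-verified Lean document; each statement's English description precedes it below -/
import Mathlib

section
/- The function P₀(x) = (x·coth(x) − 1)/x² is strictly decreasing on (0,∞). -/
/-!
`P0' x = -N x / (x ^ 3 * sinh x ^ 2)` with `N x = x ^ 2 + x * sinh x * cosh x - 2 * sinh x ^ 2`,
so it suffices that `N > 0` on `(0, ∞)`. Now `N 0 = 0`, and
`N' x = x * (2 + cosh x ^ 2 + sinh x ^ 2) - 3 * sinh x * cosh x` also vanishes at `0`, with
`N'' x = 4 * sinh x * (x * cosh x - sinh x)`; the last factor vanishes at `0` and has derivative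
`x * sinh x > 0`. A function vanishing at `0` with positive derivative on `(0, ∞)` is positive
there, so positivity propagates up the chain.
-/

noncomputable def P0 (x : ℝ) : ℝ := (x * (Real.cosh x / Real.sinh x) - 1) / x ^ 2

open Real Set

lemma pos_of_hasDerivAt_pos_of_eq_zero {f f' : ℝ → ℝ} {a x : ℝ}
    (hf : ∀ y ∈ Ici a, HasDerivAt f (f' y) y) (ha : f a = 0) (hf' : ∀ y > a, 0 < f' y)
    (hx : a < x) : 0 < f x := by
  have hmono : StrictMonoOn f (Ici a) :=
    strictMonoOn_of_hasDerivWithinAt_pos (convex_Ici a)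
      (fun y hy ↦ (hf y hy).continuousAt.continuousWithinAt)
      (fun y hy ↦ (hf y (interior_subset hy)).hasDerivWithinAt)
      (fun y hy ↦ hf' y (by simpa using hy))
  simpa [ha] using hmono self_mem_Ici hx.le hx

lemma sinh_lt_mul_cosh {x : ℝ} (hx : 0 < x) : sinh x < x * cosh x := by
  refine sub_pos.1 (pos_of_hasDerivAt_pos_of_eq_zero (f := fun y ↦ y * cosh y - sinh y)
    (fun y _ ↦ ?_) (by simp) (fun y hy ↦ mul_pos hy (sinh_pos_iff.2 hy)) hx)
  exact (((hasDerivAt_id y).mul (hasDerivAt_cosh y)).sub (hasDerivAt_sinh y)).congr_deriv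
    (by simp only [id]; ring)

lemma three_mul_sinh_mul_cosh_lt {x : ℝ} (hx : 0 < x) :
    3 * sinh x * cosh x < x * (2 + cosh x ^ 2 + sinh x ^ 2) := by
  refine sub_pos.1 (pos_of_hasDerivAt_pos_of_eq_zero
    (f := fun y ↦ y * (2 + cosh y ^ 2 + sinh y ^ 2) - 3 * sinh y * cosh y)
    (f' := fun y ↦ 4 * sinh y * (y * cosh y - sinh y)) (fun y _ ↦ ?_)
    (by simp) (fun y hy ↦ mul_pos (mul_pos four_pos (sinh_pos_iff.2 hy))
      (sub_pos.2 (sinh_lt_mul_cosh hy))) hx)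
  exact (((hasDerivAt_id y).mul ((((hasDerivAt_cosh y).pow 2).const_add 2).add
    ((hasDerivAt_sinh y).pow 2))).sub
    (((hasDerivAt_sinh y).const_mul 3).mul (hasDerivAt_cosh y))).congr_deriv
    (by simp only [id, Pi.add_apply, Pi.pow_apply]; linear_combination (-2 : ℝ) * cosh_sq y)

lemma two_mul_sinh_sq_lt {x : ℝ} (hx : 0 < x) :
    2 * sinh x ^ 2 < x ^ 2 + x * sinh x * cosh x := by
  refine sub_pos.1 (pos_of_hasDerivAt_pos_of_eq_zero
    (f := fun y ↦ y ^ 2 + y * sinh y * cosh y - 2 * sinh y ^ 2)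
    (f' := fun y ↦ y * (2 + cosh y ^ 2 + sinh y ^ 2) - 3 * sinh y * cosh y) (fun y _ ↦ ?_)
    (by simp) (fun y hy ↦ sub_pos.2 (three_mul_sinh_mul_cosh_lt hy)) hx)
  exact (((hasDerivAt_pow 2 y).add (((hasDerivAt_id y).mul (hasDerivAt_sinh y)).mul
    (hasDerivAt_cosh y))).sub (((hasDerivAt_sinh y).pow 2).const_mul 2)).congr_deriv
    (by simp only [id, Pi.mul_apply]; ring)

lemma hasDerivAt_P0 {x : ℝ} (hx : x ≠ 0) :
    HasDerivAt P0 ((2 * sinh x ^ 2 - x ^ 2 - x * sinh x * cosh x) / (x ^ 3 * sinh x ^ 2)) x := by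
  have hs : sinh x ≠ 0 := sinh_ne_zero.2 hx
  exact ((((hasDerivAt_id x).mul ((hasDerivAt_cosh x).div (hasDerivAt_sinh x) hs)).sub_const
    1).div (hasDerivAt_pow 2 x) (pow_ne_zero 2 hx)).congr_deriv (by
      simp only [id, Pi.mul_apply, Pi.div_apply]
      field_simp
      linear_combination (-x ^ 3 : ℝ) * cosh_sq x)

theorem P0_strictAntiOn : StrictAntiOn P0 (Set.Ioi (0 : ℝ)) := by
  refine strictAntiOn_of_hasDerivWithinAt_neg (convex_Ioi 0)
    (fun x hx ↦ (hasDerivAt_P0 hx.ne').continuousAt.continuousWithinAt)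
    (fun x hx ↦ (hasDerivAt_P0 (ne_of_gt (interior_subset hx))).hasDerivWithinAt)
    (fun x hx ↦ ?_)
  rw [interior_Ioi, mem_Ioi] at hx
  exact div_neg_of_neg_of_pos (by linarith [two_mul_sinh_sq_lt hx])
    (mul_pos (pow_pos hx 3) (pow_pos (sinh_pos_iff.2 hx) 2))
end

section
/- Let Φ be continuous, positive, T-periodic with mean Φ̄ and suppose 0 < σ̃ < Φ̄. Then the ODE R'(t) = μ R(t)(Φ(t) P₀(R(t)) − σ̃/3) admits a positive T-periodic solution R* (i.e., a solution with R*(0) = R*(T) > 0). -/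
/-!
In the variable `y = log R` the equation reads `y' = μ (Φ t · P0 (exp y) - σ / 3)`, whose
right-hand side is bounded (`0 < P0 ≤ 1/3`) and locally Lipschitz, so the time-`T` map is
defined and continuous. Since `P0 → 0` at `∞`, a high level `b` cannot be crossed upwards.
Since `P0 → 1/3` at `0⁺` and `σ < Φ̄`, below a low level `c` the drift has nonnegative mean
over a period, while `y` never decreases faster than `μσ/3`. Hence the time-`T` map sends
`[c - μσT/3, b]` into itself, it has a fixed point, and the corresponding solution extends
`T`-periodically.
-/

open Real Set Filter Topology Function MeasureTheory Metric
open scoped NNReal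

theorem nonneg_of_hasDerivAt_of_nonneg {g g' : ℝ → ℝ} (hg : ∀ x, HasDerivAt g (g' x) x)
    (h0 : g 0 = 0) (hg' : ∀ x, 0 < x → 0 ≤ g' x) {x : ℝ} (hx : 0 ≤ x) : 0 ≤ g x := by
  have hmono : MonotoneOn g (Ici 0) :=
    monotoneOn_of_hasDerivWithinAt_nonneg (convex_Ici 0)
      (fun t _ => (hg t).continuousAt.continuousWithinAt)
      (fun t _ => (hg t).hasDerivWithinAt) (fun t ht => hg' t (by simpa using ht))
  simpa [h0] using hmono (mem_Ici.2 le_rfl) hx hx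

theorem cube_div_three_le_mul_cosh_sub_sinh {x : ℝ} (hx : 0 ≤ x) :
    x ^ 3 / 3 ≤ x * cosh x - sinh x := by
  have := nonneg_of_hasDerivAt_of_nonneg (g := fun x => x * cosh x - sinh x - x ^ 3 / 3)
    (fun x => (((hasDerivAt_id' x).mul (hasDerivAt_cosh x)).sub (hasDerivAt_sinh x)).sub
      ((hasDerivAt_pow 3 x).div_const 3)) (by simp)
    (fun x hx => by
      have := self_le_sinh_iff.2 hx.le
      norm_num; nlinarith) hx
  linarith

theorem sinh_le_mul_cosh {x : ℝ} (hx : 0 ≤ x) : sinh x ≤ x * cosh x := by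
  nlinarith [cube_div_three_le_mul_cosh_sub_sinh hx, pow_nonneg hx 3]

theorem three_mul_cosh_sub_sinh_le {x : ℝ} (hx : 0 ≤ x) :
    3 * (x * cosh x - sinh x) ≤ x ^ 2 * sinh x := by
  have := nonneg_of_hasDerivAt_of_nonneg
    (g := fun x => x ^ 2 * sinh x - 3 * (x * cosh x - sinh x))
    (fun x => ((hasDerivAt_pow 2 x).mul (hasDerivAt_sinh x)).sub
      ((((hasDerivAt_id' x).mul (hasDerivAt_cosh x)).sub (hasDerivAt_sinh x)).const_mul 3))
    (by simp)
    (fun x hx => by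
      have := sinh_le_mul_cosh hx.le
      norm_num; nlinarith) hx
  linarith

theorem P0_eq {x : ℝ} (hx : 0 < x) : P0 x = (x * cosh x - sinh x) / (x ^ 2 * sinh x) := by
  have := (sinh_pos_iff.2 hx).ne'
  unfold P0; field_simp

theorem P0_pos {x : ℝ} (hx : 0 < x) : 0 < P0 x := by
  rw [P0_eq hx]
  have := cube_div_three_le_mul_cosh_sub_sinh hx.le
  have := sinh_pos_iff.2 hx
  apply div_pos (by nlinarith [pow_pos hx 3]) (by positivity)

theorem P0_le_one_third {x : ℝ} (hx : 0 < x) : P0 x ≤ 1 / 3 := by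
  rw [P0_eq hx, div_le_iff₀ (by have := sinh_pos_iff.2 hx; positivity)]
  linarith [three_mul_cosh_sub_sinh_le hx.le]

theorem inv_three_mul_cosh_le_P0 {x : ℝ} (hx : 0 < x) : 1 / (3 * cosh x) ≤ P0 x := by
  have hs := sinh_pos_iff.2 hx
  have hc := cosh_pos x
  rw [P0_eq hx, div_le_div_iff₀ (by positivity) (by positivity)]
  nlinarith [cube_div_three_le_mul_cosh_sub_sinh hx.le, sinh_le_mul_cosh hx.le, sq_nonneg x,
    mul_le_mul_of_nonneg_left (sinh_le_mul_cosh hx.le) (sq_nonneg x)]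

theorem P0_le_inv {x : ℝ} (hx : 0 < x) : P0 x ≤ x⁻¹ := by
  have hs := sinh_pos_iff.2 hx
  rw [P0_eq hx, ← one_div, div_le_div_iff₀ (by positivity) hx]
  have h1 := add_one_le_exp (2 * x)
  have h2 : exp (2 * x) = exp x * exp x := by rw [← exp_add]; ring_nf
  have h3 : exp x * exp (-x) = 1 := by rw [← exp_add]; simp
  rw [cosh_eq, sinh_eq]
  have := exp_pos x
  have := exp_pos (-x)
  nlinarith [mul_pos hx hx]

theorem contDiff_P0_comp_exp : ContDiff ℝ 1 (fun z => P0 (exp z)) := by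
  unfold P0
  fun_prop (disch := exact fun z => by have := sinh_pos_iff.2 (exp_pos z); positivity)

section IntegralCurve

variable {f : ℝ → ℝ → ℝ} {y : ℝ → ℝ} {a b : ℝ}

theorem IsIntegralCurveOn.integral_le_sub (hy : IsIntegralCurveOn y f (Icc a b)) (hab : a ≤ b)
    {φ : ℝ → ℝ} (hφ : IntegrableOn φ (Icc a b)) (hle : ∀ t ∈ Ioo a b, φ t ≤ f t (y t)) :
    ∫ t in a..b, φ t ≤ y b - y a :=
  intervalIntegral.integral_le_sub_of_hasDeriv_right_of_le hab hy.continuousOn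
    (fun t ht => ((hy t (Ioo_subset_Icc_self ht)).hasDerivAt
      (Icc_mem_nhds ht.1 ht.2)).hasDerivWithinAt) hφ hle

theorem IsIntegralCurveOn.sub_mul_le (hy : IsIntegralCurveOn y f (Icc a b)) (hab : a ≤ b)
    {m : ℝ} (hm : ∀ t ∈ Ioo a b, -m ≤ f t (y t)) : y a - m * (b - a) ≤ y b := by
  have := hy.integral_le_sub hab (integrableOn_const measure_Icc_lt_top.ne) hm
  simp only [intervalIntegral.integral_const, smul_eq_mul] at this
  linarith

theorem IsIntegralCurveOn.le_of_le_of_forall_neg (hy : IsIntegralCurveOn y f (Icc a b)) {c : ℝ}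
    (hc : ∀ t ∈ Ico a b, f t c < 0) (ha : y a ≤ c) : ∀ t ∈ Icc a b, y t ≤ c :=
  image_le_of_deriv_right_lt_deriv_boundary hy.continuousOn
    (fun t ht => (hy t (Ico_subset_Icc_self ht)).mono_of_mem_nhdsWithin
      (Icc_mem_nhdsGE_of_mem ⟨ht.1, ht.2⟩)) ha (fun _ => hasDerivAt_const _ c)
    (fun t ht hyt => by rw [hyt]; exact hc t ht)

theorem IsIntegralCurveOn.sub_mul_le_of_integral_nonneg (hy : IsIntegralCurveOn y f (Icc a b))
    (hab : a ≤ b) {m c : ℝ} (hm0 : 0 ≤ m) (hm : ∀ t ∈ Ioo a b, ∀ z, -m ≤ f t z) {φ : ℝ → ℝ}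
    (hφ : IntegrableOn φ (Icc a b)) (hφ0 : 0 ≤ ∫ t in a..b, φ t)
    (hc : ∀ t ∈ Ioo a b, ∀ z ≤ c, φ t ≤ f t z) (ha : c - m * (b - a) ≤ y a) :
    c - m * (b - a) ≤ y b := by
  by_cases hbelow : ∀ t ∈ Icc a b, y t ≤ c
  · have := hy.integral_le_sub hab hφ fun t ht => hc t ht _ (hbelow t (Ioo_subset_Icc_self ht))
    linarith
  · obtain ⟨s, hs, hcs⟩ : ∃ s ∈ Icc a b, c < y s := by
      simpa only [not_forall, not_le, exists_prop] using hbelow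
    have := (hy.mono (Icc_subset_Icc_left hs.1)).sub_mul_le hs.2 fun t ht =>
      hm t ⟨hs.1.trans_lt ht.1, ht.2⟩ (y t)
    nlinarith [hs.1]

end IntegralCurve

theorem exists_flow_continuousOn_of_norm_le {E : Type*} [NormedAddCommGroup E] [NormedSpace ℝ E]
    [CompleteSpace E] {f : ℝ → E → E} {T : ℝ} (hT : 0 ≤ T) {x₀ : E} {r L K : ℝ≥0}
    (hlip : ∀ t ∈ Icc 0 T, LipschitzOnWith K (f t) (closedBall x₀ (r + L * T)))
    (hcont : ∀ x ∈ closedBall x₀ (r + L * T), ContinuousOn (f · x) (Icc 0 T))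
    (hbound : ∀ t ∈ Icc 0 T, ∀ x ∈ closedBall x₀ (r + L * T), ‖f t x‖ ≤ L) :
    ∃ α : E → ℝ → E, (∀ x ∈ closedBall x₀ r, α x 0 = x ∧ IsIntegralCurveOn (α x) f (Icc 0 T)) ∧
      ContinuousOn (α · T) (closedBall x₀ r) := by
  have hpl : IsPicardLindelof f (tmin := 0) (tmax := T) ⟨0, left_mem_Icc.2 hT⟩ x₀
      (r + L * ⟨T, hT⟩) r L K :=
    { lipschitzOnWith := hlip
      continuousOn := hcont
      norm_le := hbound
      mul_max_le := by simp [hT]; rfl }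
  obtain ⟨α, hα, K', hK'⟩ := hpl.exists_forall_mem_closedBall_eq_hasDerivWithinAt_lipschitzOnWith
  exact ⟨α, hα, (hK' T (right_mem_Icc.2 hT)).continuousOn⟩

theorem exists_isIntegralCurveOn_eq_of_mapsTo {f : ℝ → ℝ → ℝ} {T a b L : ℝ} (hT : 0 ≤ T)
    (hab : a ≤ b) (hlip : ∀ c d, ∃ K, ∀ t ∈ Icc 0 T, LipschitzOnWith K (f t) (Icc c d))
    (hcont : ∀ x, ContinuousOn (f · x) (Icc 0 T)) (hbound : ∀ t ∈ Icc 0 T, ∀ x, |f t x| ≤ L)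
    (hmaps : ∀ y, IsIntegralCurveOn y f (Icc 0 T) → y 0 ∈ Icc a b → y T ∈ Icc a b) :
    ∃ y, IsIntegralCurveOn y f (Icc 0 T) ∧ y 0 = y T := by
  set r := ((b - a) / 2).toNNReal
  have hIcc : Icc a b = closedBall ((a + b) / 2) r := by
    rw [Real.Icc_eq_closedBall, Real.coe_toNNReal _ (by linarith)]
  obtain ⟨K, hK⟩ := hlip ((a + b) / 2 - (r + L.toNNReal * T)) ((a + b) / 2 + (r + L.toNNReal * T))
  obtain ⟨α, hα, hcontα⟩ := exists_flow_continuousOn_of_norm_le hT (K := K)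
    (by simpa only [Real.closedBall_eq_Icc] using hK) (fun x _ => hcont x)
    (fun t ht x _ => (hbound t ht x).trans (Real.le_coe_toNNReal L))
  rw [← hIcc] at hα hcontα
  have hmapsα : MapsTo (α · T) (Icc a b) (Icc a b) := fun x hx => by
    simpa [(hα x hx).1] using hmaps (α x) (hα x hx).2 (by rw [(hα x hx).1]; exact hx)
  obtain ⟨w, hw, hfix⟩ := exists_mem_Icc_isFixedPt_of_mapsTo hcontα hab hmapsα
  exact ⟨α w, (hα w hw).2, (hα w hw).1.trans hfix.symm⟩

theorem Function.Periodic.isIntegralCurve_of_isIntegralCurveOn {E : Type*} [NormedAddCommGroup E]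
    [NormedSpace ℝ E] {Y : ℝ → E} {f : ℝ → E → E} {T : ℝ} (hT : 0 < T) (hY : Periodic Y T)
    (hf : Periodic f T) (h : IsIntegralCurveOn Y f (Icc 0 T)) : IsIntegralCurve Y f := by
  have hIco : ∀ s ∈ Ico 0 T, HasDerivAt Y (f s (Y s)) s := by
    rintro s ⟨hs0, hsT⟩
    rcases hs0.eq_or_lt with rfl | hs0
    · have hleft : HasDerivWithinAt Y (f 0 (Y 0)) (Icc (-T) 0) 0 := by
        have hT' : HasDerivWithinAt Y (f T (Y T)) (Icc 0 T) (0 + T) := by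
          simpa using h T (right_mem_Icc.2 hT.le)
        have := hT'.scomp 0 ((hasDerivAt_id' 0).add_const T).hasDerivWithinAt
          (fun u (hu : u ∈ Icc (-T) 0) => ⟨by linarith [hu.1], by linarith [hu.2]⟩)
        rw [show f T (Y T) = f 0 (Y 0) by simpa using congr_arg₂ (· ·) (hf 0) (hY 0)] at this
        simpa only [comp_def, hY _, one_smul] using this
      have := hleft.union (h 0 (left_mem_Icc.2 hT.le))
      rw [Icc_union_Icc_eq_Icc (by linarith) hT.le] at this
      exact this.hasDerivAt (Icc_mem_nhds (by linarith) hT)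
    · exact (h s ⟨hs0.le, hsT.le⟩).hasDerivAt (Icc_mem_nhds hs0 hsT)
  intro t
  set n := toIcoDiv hT 0 t
  have hmem : t - n • T ∈ Ico 0 T := by
    simpa only [zero_add] using sub_toIcoDiv_zsmul_mem_Ico hT 0 t
  have hshift := (hIco _ hmem).comp_sub_const t (n • T)
  simpa only [hY.sub_zsmul_eq, hf.sub_zsmul_eq] using hshift

theorem IsIntegralCurveOn.exists_isIntegralCurve_periodic {E : Type*} [NormedAddCommGroup E]
    [NormedSpace ℝ E] {y : ℝ → E} {f : ℝ → E → E} {T : ℝ} (hT : 0 < T) (hf : Periodic f T)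
    (hy : IsIntegralCurveOn y f (Icc 0 T)) (hyT : y 0 = y T) :
    ∃ Y, IsIntegralCurve Y f ∧ Periodic Y T := by
  set Y := fun t => y (toIcoMod hT 0 t)
  have hYper : Periodic Y T := fun t => by simp only [Y, toIcoMod_add_right]
  have hYy : EqOn Y y (Icc 0 T) := by
    rintro t ⟨ht0, htT⟩
    rcases htT.lt_or_eq with htT | rfl
    · simp only [Y, (toIcoMod_eq_self hT).2 ⟨ht0, by simpa using htT⟩]
    · simpa [Y, hyT] using congr_arg y (toIcoMod_apply_right hT 0)
  refine ⟨Y, hYper.isIntegralCurve_of_isIntegralCurveOn hT hf fun t ht => ?_, hYper⟩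
  rw [hYy ht]
  exact (hy t ht).congr hYy (hYy ht)

theorem tendsto_P0_nhdsGT_zero : Tendsto P0 (𝓝[>] 0) (𝓝 (1 / 3)) := by
  have hlow : Tendsto (fun x => 1 / (3 * cosh x)) (𝓝[>] 0) (𝓝 (1 / 3)) := by
    have : ContinuousAt (fun x => 1 / (3 * cosh x)) 0 := by fun_prop (disch := positivity)
    simpa using this.tendsto.mono_left nhdsWithin_le_nhds
  refine tendsto_of_tendsto_of_tendsto_of_le_of_le' hlow tendsto_const_nhds ?_ ?_
  · filter_upwards [self_mem_nhdsWithin] with x hx using inv_three_mul_cosh_le_P0 hx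
  · filter_upwards [self_mem_nhdsWithin] with x hx using P0_le_one_third hx

theorem tendsto_P0_atTop : Tendsto P0 atTop (𝓝 0) := by
  refine tendsto_of_tendsto_of_tendsto_of_le_of_le' tendsto_const_nhds tendsto_inv_atTop_zero ?_ ?_
  · filter_upwards [eventually_gt_atTop 0] with x hx using (P0_pos hx).le
  · filter_upwards [eventually_gt_atTop 0] with x hx using P0_le_inv hx

noncomputable def logGrowthField (Φ : ℝ → ℝ) (μ σ t z : ℝ) : ℝ := μ * (Φ t * P0 (exp z) - σ / 3)

section LogGrowthField

variable {Φ : ℝ → ℝ} {μ σ T : ℝ}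

theorem neg_le_logGrowthField {t : ℝ} (hμ : 0 ≤ μ) (hΦ : 0 ≤ Φ t) (z : ℝ) :
    -(μ * σ / 3) ≤ logGrowthField Φ μ σ t z := by
  have := mul_nonneg hΦ (P0_pos (exp_pos z)).le
  unfold logGrowthField
  nlinarith

theorem abs_logGrowthField_le {t M : ℝ} (hμ : 0 ≤ μ) (hσ : 0 ≤ σ) (hΦ : |Φ t| ≤ M) (z : ℝ) :
    |logGrowthField Φ μ σ t z| ≤ μ * (M + σ) / 3 := by
  have hP0 := P0_pos (exp_pos z)
  have hP0le := P0_le_one_third (exp_pos z)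
  have : |Φ t * P0 (exp z) - σ / 3| ≤ (M + σ) / 3 := by
    calc |Φ t * P0 (exp z) - σ / 3| ≤ |Φ t| * P0 (exp z) + σ / 3 := by
          simpa [abs_mul, abs_of_pos hP0, abs_of_nonneg (by positivity : 0 ≤ σ / 3)] using
            abs_sub (Φ t * P0 (exp z)) (σ / 3)
      _ ≤ M * (1 / 3) + σ / 3 := by gcongr; exact (abs_nonneg _).trans hΦ
      _ = (M + σ) / 3 := by ring
  rw [logGrowthField, abs_mul, abs_of_nonneg hμ]
  calc μ * |Φ t * P0 (exp z) - σ / 3| ≤ μ * ((M + σ) / 3) := by gcongr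
    _ = μ * (M + σ) / 3 := by ring

theorem exists_lipschitzOnWith_logGrowthField {s : Set ℝ} {M : ℝ} (hΦ : ∀ t ∈ s, |Φ t| ≤ M)
    (c d : ℝ) : ∃ K, ∀ t ∈ s, LipschitzOnWith K (logGrowthField Φ μ σ t) (Icc c d) := by
  obtain ⟨K, hK⟩ := contDiff_P0_comp_exp.contDiffOn.exists_lipschitzOnWith one_ne_zero
    (convex_Icc c d) isCompact_Icc
  refine ⟨‖μ‖₊ * M.toNNReal * K, fun t ht => LipschitzOnWith.of_dist_le_mul fun x hx z hz => ?_⟩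
  have hxz := hK.dist_le_mul x hx z hz
  rw [Real.dist_eq] at hxz ⊢
  calc |logGrowthField Φ μ σ t x - logGrowthField Φ μ σ t z|
      = |μ| * |Φ t| * |P0 (exp x) - P0 (exp z)| := by
        rw [logGrowthField, logGrowthField, ← abs_mul, ← abs_mul]; ring_nf
    _ ≤ |μ| * M.toNNReal * (K * dist x z) := by
        gcongr
        exact (hΦ t ht).trans (Real.le_coe_toNNReal M)
    _ = _ := by simp [mul_assoc]

theorem exists_Icc_mapsTo_logGrowthField (hT : 0 < T) (hΦc : ContinuousOn Φ (Icc 0 T))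
    (hΦ0 : ∀ t ∈ Icc 0 T, 0 ≤ Φ t) (hμ : 0 < μ) (hσ : 0 < σ)
    (hσT : σ * T < ∫ t in 0..T, Φ t) :
    ∃ a b, a ≤ b ∧ ∀ y, IsIntegralCurveOn y (logGrowthField Φ μ σ) (Icc 0 T) →
      y 0 ∈ Icc a b → y T ∈ Icc a b := by
  obtain ⟨M, hM⟩ := isCompact_Icc.exists_bound_of_continuousOn hΦc
  set I := ∫ t in 0..T, Φ t
  have hI : 0 < I := lt_trans (by positivity) hσT
  set κ := σ * T / (3 * I)
  have hκ : κ < 1 / 3 := by rw [div_lt_iff₀ (by positivity)]; linarith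
  obtain ⟨c, hc⟩ := eventually_atBot.1 <|
    (tendsto_P0_nhdsGT_zero.comp tendsto_exp_atBot_nhdsGT).eventually (eventually_gt_nhds hκ)
  obtain ⟨b, hb⟩ := eventually_atTop.1 <|
    ((tendsto_P0_atTop.comp tendsto_exp_atTop).const_mul M).eventually
      (eventually_lt_nhds (show M * 0 < σ / 3 by simpa using div_pos hσ three_pos))
  refine ⟨c - μ * σ / 3 * T, max b c,
    by nlinarith [le_max_right b c, mul_pos (mul_pos hμ hσ) hT], fun y hy hy0 => ⟨?_, ?_⟩⟩
  · have hφ : ∫ t in 0..T, μ * (Φ t * κ - σ / 3) = 0 := by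
      have hΦi : IntervalIntegrable Φ volume 0 T := hΦc.intervalIntegrable_of_Icc hT.le
      rw [intervalIntegral.integral_const_mul, intervalIntegral.integral_sub
        (hΦi.mul_const κ) intervalIntegrable_const, intervalIntegral.integral_mul_const]
      simp only [intervalIntegral.integral_const, smul_eq_mul, κ]
      field_simp
      ring
    have hφint : IntegrableOn (fun t => μ * (Φ t * κ - σ / 3)) (Icc 0 T) :=
      (((hΦc.mul continuousOn_const).sub continuousOn_const).const_smul μ).integrableOn_Icc
    have hφle : ∀ t ∈ Ioo 0 T, ∀ z ≤ c, μ * (Φ t * κ - σ / 3) ≤ logGrowthField Φ μ σ t z := by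
      intro t ht z hz
      have := hΦ0 t (Ioo_subset_Icc_self ht)
      unfold logGrowthField
      gcongr
      exact (hc z hz).le
    simpa using hy.sub_mul_le_of_integral_nonneg hT.le (by positivity)
      (fun t ht z => neg_le_logGrowthField hμ.le (hΦ0 t (Ioo_subset_Icc_self ht)) z)
      hφint hφ.ge hφle (by simpa using hy0.1)
  · refine hy.le_of_le_of_forall_neg (fun t ht => ?_) hy0.2 T (right_mem_Icc.2 hT.le)
    have hP0 := (P0_pos (exp_pos (max b c))).le
    have hΦM : Φ t ≤ M := (le_abs_self _).trans (hM t (Ico_subset_Icc_self ht))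
    have hsmall : M * P0 (exp (max b c)) < σ / 3 := hb (max b c) (le_max_left b c)
    exact mul_neg_of_pos_of_neg hμ (by nlinarith [mul_le_mul_of_nonneg_right hΦM hP0])

theorem exists_isIntegralCurve_logGrowthField_periodic (hT : 0 < T)
    (hΦc : ContinuousOn Φ (Icc 0 T)) (hΦ0 : ∀ t ∈ Icc 0 T, 0 ≤ Φ t) (hΦper : Periodic Φ T)
    (hμ : 0 < μ) (hσ : 0 < σ) (hσT : σ * T < ∫ t in 0..T, Φ t) :
    ∃ Y, IsIntegralCurve Y (logGrowthField Φ μ σ) ∧ Periodic Y T := by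
  obtain ⟨a, b, hab, hmaps⟩ := exists_Icc_mapsTo_logGrowthField hT hΦc hΦ0 hμ hσ hσT
  obtain ⟨M, hM⟩ := isCompact_Icc.exists_bound_of_continuousOn hΦc
  obtain ⟨y, hy, hyT⟩ := exists_isIntegralCurveOn_eq_of_mapsTo hT.le hab
    (exists_lipschitzOnWith_logGrowthField hM) (fun z => by unfold logGrowthField; fun_prop)
    (fun t ht => abs_logGrowthField_le hμ.le hσ.le (hM t ht)) hmaps
  have hper : Periodic (logGrowthField Φ μ σ) T := fun t => by
    ext z; simp only [logGrowthField, hΦper t]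
  exact hy.exists_isIntegralCurve_periodic hT hper hyT

end LogGrowthField

theorem exists_periodic_solution
    (T : ℝ) (hT : 0 < T) (Φ : ℝ → ℝ) (hΦc : Continuous Φ)
    (hΦpos : ∀ t, 0 < Φ t) (hΦper : ∀ t, Φ (t + T) = Φ t)
    (μ σ : ℝ) (hμ : 0 < μ) (hσ : 0 < σ)
    (hσlt : σ < (1 / T) * ∫ t in (0 : ℝ)..T, Φ t) :
    ∃ R : ℝ → ℝ, (∀ t, 0 ≤ t → 0 < R t) ∧
      (∀ t, 0 ≤ t → HasDerivAt R (μ * R t * (Φ t * P0 (R t) - σ / 3)) t) ∧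
      R 0 = R T := by
  rw [one_div, inv_mul_eq_div, lt_div_iff₀ hT] at hσlt
  obtain ⟨Y, hY, hYper⟩ := exists_isIntegralCurve_logGrowthField_periodic hT
    hΦc.continuousOn (fun t _ => (hΦpos t).le) hΦper hμ hσ hσlt
  refine ⟨fun t => exp (Y t), fun t _ => exp_pos _, fun t _ => ?_, ?_⟩
  · convert (hY t).exp using 1
    simp only [logGrowthField]
    ring
  · simpa using congr_arg exp (hYper 0).symm
end
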